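/- Let K be an infinite compact Hausdorff space. Then the Banach space C(K) of real-valued continuous functions on K with the supremum norm admits no normalized 1-unconditional basis; that is, there exist no families (e_i)_{i∈ℕ} in C(K) and (e*_i)_{i∈ℕ} in C(K)* satisfying the conditions of a normalized 1-unconditional basis. -/

import Mathlib

/-!
Flipping the sign of the `j`-th coordinate is the linear isometry `x ↦ x - 2 f_j(x) e_j`, so it
maps the extreme point `1` of the unit ball of `C(K)` to a function of modulus one; hence every
`P_j = f_j(1) e_j` takes only the values `0` and `1`. As `∑ P_j = 1` uniformly, finitely many
`P_j` cover `K`, so for infinite `K` some `P = P_j` equals `1` on an infinite set. With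
`ψ = f_j / f_j(1)` the map `x ↦ x - 2 ψ(x) P` is an isometry and `ψ(P) = 1`; testing it on `P w`
forces `ψ(P w) = 1/2` whenever `0 ≤ w ≤ 1` takes both values `0` and `1` on `{P = 1}`. Three
points of `{P = 1}` yield Urysohn functions `u`, `v` such that `u`, `v` and `u + v` are all of
this kind, contradicting the additivity of `ψ`.
-/

noncomputable section

/-- `(e, f)` is a normalized 1-unconditional basis of `X` with biorthogonal functionals `f`. -/
structure IsUncondBasis {X : Type*} [NormedAddCommGroup X] [NormedSpace ℝ X]
    (e : ℕ → X) (f : ℕ → X →L[ℝ] ℝ) : Prop where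
  norm_e : ∀ i, ‖e i‖ = 1
  biorth : ∀ i j, f i (e j) = if i = j then (1 : ℝ) else 0
  expand : ∀ x : X, HasSum (fun i => f i x • e i) x
  signs : ∀ (x : X) (θ : ℕ → ℝ), (∀ i, θ i = 1 ∨ θ i = -1) →
    ∃ y : X, HasSum (fun i => θ i • f i x • e i) y ∧ ‖y‖ = ‖x‖

open Metric Set

lemma LinearIsometryEquiv.map_mem_extremePoints_closedBall {X Y : Type*}
    [NormedAddCommGroup X] [NormedSpace ℝ X] [NormedAddCommGroup Y] [NormedSpace ℝ Y]
    (T : X ≃ₗᵢ[ℝ] Y) {x : X} (hx : x ∈ extremePoints ℝ (closedBall 0 1)) :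
    T x ∈ extremePoints ℝ (closedBall 0 1) := by
  have h := image_extremePoints T (closedBall (0 : X) 1)
  rw [T.image_closedBall, map_zero] at h
  exact h ▸ mem_image_of_mem T hx

namespace IsUncondBasis

variable {X : Type*} [NormedAddCommGroup X] [NormedSpace ℝ X]
  {e : ℕ → X} {f : ℕ → X →L[ℝ] ℝ}

lemma apply_self (hb : IsUncondBasis e f) (j : ℕ) : f j (e j) = 1 := by
  simpa using hb.biorth j j

lemma norm_sub_two_mul_smul (hb : IsUncondBasis e f) (x : X) (j : ℕ) :
    ‖x - (2 * f j x) • e j‖ = ‖x‖ := by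
  obtain ⟨y, hy, hyx⟩ := hb.signs x (fun i => if i = j then -1 else 1)
    (fun i => by split_ifs <;> simp)
  have hflip : (fun i => (if i = j then (-1 : ℝ) else 1) • f i x • e i)
      = Function.update (fun i => f i x • e i) j (-(f j x • e j)) := by
    funext i
    rcases eq_or_ne i j with rfl | hij
    · simp
    · simp [hij]
  rw [hflip] at hy
  have hsum := (hb.expand x).update j (-(f j x • e j))
  rw [← hyx, hy.unique hsum]
  congr 1
  module

def reflection (hb : IsUncondBasis e f) (j : ℕ) : X ≃ₗᵢ[ℝ] X where
  toLinearEquiv := LinearEquiv.ofInvolutive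
    (LinearMap.id - ((2 : ℝ) • (f j : X →ₗ[ℝ] ℝ)).smulRight (e j)) fun x => by
      simp only [LinearMap.sub_apply, LinearMap.id_apply, LinearMap.smulRight_apply,
        LinearMap.smul_apply, ContinuousLinearMap.coe_coe, map_sub, map_smul, hb.apply_self,
        smul_eq_mul]
      module
  norm_map' x := by exact hb.norm_sub_two_mul_smul x j

@[simp]
lemma reflection_apply (hb : IsUncondBasis e f) (j : ℕ) (x : X) :
    hb.reflection j x = x - (2 * f j x) • e j :=
  rfl

end IsUncondBasis

namespace ContinuousMap

variable {K : Type*} [TopologicalSpace K] [CompactSpace K]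

lemma one_mem_extremePoints_closedBall : (1 : C(K, ℝ)) ∈ extremePoints ℝ (closedBall 0 1) := by
  refine ⟨mem_closedBall_zero_iff.mpr ((norm_le _ zero_le_one).mpr fun t => by simp), ?_⟩
  rintro x₁ hx₁ x₂ hx₂ ⟨a, b, ha, hb, hab, hx⟩
  ext t
  have h₁ := (abs_le.mp ((norm_coe_le_norm x₁ t).trans (mem_closedBall_zero_iff.mp hx₁))).2
  have h₂ := (abs_le.mp ((norm_coe_le_norm x₂ t).trans (mem_closedBall_zero_iff.mp hx₂))).2
  have hxt : a * x₁ t + b * x₂ t = 1 := by simpa using congr($hx t)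
  simp only [one_apply]
  nlinarith

lemma abs_apply_eq_one_of_mem_extremePoints_closedBall {ε : C(K, ℝ)}
    (hε : ε ∈ extremePoints ℝ (closedBall 0 1)) (t : K) : |ε t| = 1 := by
  have hle : ∀ s, |ε s| ≤ 1 := fun s =>
    (norm_coe_le_norm ε s).trans (mem_closedBall_zero_iff.mp hε.1)
  set d : C(K, ℝ) := 1 - |ε|
  have hd : ∀ s, d s = 1 - |ε s| := fun s => rfl
  have hmem : ∀ σ : ℝ, |σ| = 1 → ε + σ • d ∈ closedBall 0 1 := fun σ hσ =>
    mem_closedBall_zero_iff.mpr <| (norm_le _ zero_le_one).mpr fun s => by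
      calc ‖ε s + σ * d s‖ ≤ |ε s| + |σ| * |d s| := by
            rw [Real.norm_eq_abs, ← abs_mul]; exact abs_add_le _ _
        _ = 1 := by rw [hσ, hd, abs_of_nonneg (sub_nonneg.mpr (hle s))]; ring
  have hseg : ε ∈ openSegment ℝ (ε + (1 : ℝ) • d) (ε + (-1 : ℝ) • d) :=
    ⟨1 / 2, 1 / 2, by norm_num, by norm_num, by norm_num, by module⟩
  have hεd := hε.2 (hmem 1 (by simp)) (hmem (-1) (by simp)) hseg
  have ht := congr($hεd t)
  simp only [add_apply, hd, one_smul] at ht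
  linarith

lemma exists_support_infinite_of_hasSum_one [Infinite K] {ι : Type*} {φ : ι → C(K, ℝ)}
    (h : HasSum φ 1) : ∃ i, (Function.support (φ i)).Infinite := by
  obtain ⟨s, hs⟩ := Filter.eventually_atTop.mp (Metric.tendsto_nhds.mp h 1 one_pos)
  have hcover : ∀ t, ∃ i ∈ s, φ i t ≠ 0 := by
    by_contra! h0
    obtain ⟨t, ht⟩ := h0
    have hnorm := hs s le_rfl
    rw [dist_eq_norm] at hnorm
    have hsum : (∑ i ∈ s, φ i - 1) t = -1 := by simp [sum_apply, Finset.sum_eq_zero ht]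
    have := (norm_coe_le_norm _ t).trans_lt hnorm
    rw [hsum] at this
    norm_num at this
  by_contra! hfin
  refine infinite_univ (α := K) ((s.finite_toSet.biUnion fun i _ => hfin i).subset ?_)
  intro t _
  obtain ⟨i, hi, hit⟩ := hcover t
  exact mem_biUnion hi hit

variable {P : C(K, ℝ)} {ψ : C(K, ℝ) →ₗ[ℝ] ℝ}

lemma two_mul_apply_mul_eq_zero_or_one (hiso : ∀ x, ‖x - (2 * ψ x) • P‖ = ‖x‖)
    (hP₀ : 0 ≤ P) (hP₁ : P ≤ 1) {w : C(K, ℝ)} (hw₀ : 0 ≤ w) (hw₁ : w ≤ 1) {s₀ s₁ : K}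
    (hPs₀ : P s₀ = 1) (hPs₁ : P s₁ = 1) (hws₀ : w s₀ = 0) (hws₁ : w s₁ = 1) :
    2 * ψ (P * w) = 0 ∨ 2 * ψ (P * w) = 1 := by
  have hP : ∀ t, 0 ≤ P t ∧ P t ≤ 1 := fun t => ⟨hP₀ t, hP₁ t⟩
  have hw : ∀ t, 0 ≤ w t ∧ w t ≤ 1 := fun t => ⟨hw₀ t, hw₁ t⟩
  set α := 2 * ψ (P * w)
  have hy : ∀ t, (P * w - α • P) t = P t * (w t - α) := fun t => by simp; ring
  have hPw : ‖P * w‖ = 1 := by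
    refine le_antisymm ((norm_le _ zero_le_one).mpr fun t => ?_) ?_
    · rw [mul_apply, norm_mul, Real.norm_of_nonneg (hP t).1, Real.norm_of_nonneg (hw t).1]
      exact mul_le_one₀ (hP t).2 (hw t).1 (hw t).2
    · simpa [hPs₁, hws₁] using norm_coe_le_norm (P * w) s₁
  have hyn : ‖P * w - α • P‖ = 1 := (hiso _).trans hPw
  have hbound : ∀ t, |P t * (w t - α)| ≤ 1 := fun t => by
    simpa [hy, hyn] using norm_coe_le_norm (P * w - α • P) t
  have hα₀ := abs_le.mp (by simpa [hPs₀, hws₀] using hbound s₀ : |α| ≤ 1)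
  have hα₁ := abs_le.mp (by simpa [hPs₁, hws₁] using hbound s₁ : |1 - α| ≤ 1)
  -- `P * w - α • P` has norm `1` but takes its values in `[-α, 1 - α]`.
  have hmax : (1 : ℝ) ≤ max α (1 - α) := by
    refine hyn.symm.le.trans <| (norm_le _ (by linarith [le_max_left α (1 - α)])).mpr fun t => ?_
    rw [Real.norm_eq_abs, hy, abs_mul, abs_of_nonneg (hP t).1]
    refine (mul_le_of_le_one_left (abs_nonneg _) (hP t).2).trans (abs_le.mpr ⟨?_, ?_⟩)
    · linarith [(hw t).1, le_max_left α (1 - α)]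
    · linarith [(hw t).2, le_max_right α (1 - α)]
  rcases le_max_iff.mp hmax with h | h
  · right; linarith
  · left; linarith

lemma apply_mul_eq_half (hiso : ∀ x, ‖x - (2 * ψ x) • P‖ = ‖x‖) (hψ : ψ P = 1)
    (hP₀ : 0 ≤ P) (hP₁ : P ≤ 1) {w : C(K, ℝ)} (hw₀ : 0 ≤ w) (hw₁ : w ≤ 1) {s₀ s₁ : K}
    (hPs₀ : P s₀ = 1) (hPs₁ : P s₁ = 1) (hws₀ : w s₀ = 0) (hws₁ : w s₁ = 1) :
    ψ (P * w) = 1 / 2 := by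
  have hw := two_mul_apply_mul_eq_zero_or_one hiso hP₀ hP₁ hw₀ hw₁ hPs₀ hPs₁ hws₀ hws₁
  have hw' := two_mul_apply_mul_eq_zero_or_one hiso hP₀ hP₁ (w := 1 - w)
    (sub_nonneg.mpr hw₁) (sub_le_self _ hw₀) hPs₁ hPs₀ (by simp [hws₁]) (by simp [hws₀])
  rw [mul_sub, mul_one, map_sub, hψ] at hw'
  rcases hw with hw | hw <;> rcases hw' with hw' | hw' <;> linarith

lemma exists_norm_sub_two_mul_smul_ne [T2Space K] (hψ : ψ P = 1) (hP₀ : 0 ≤ P) (hP₁ : P ≤ 1)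
    {t₁ t₂ t₃ : K} (h₁₂ : t₁ ≠ t₂) (h₁₃ : t₁ ≠ t₃) (h₂₃ : t₂ ≠ t₃) (hPt₁ : P t₁ = 1) (hPt₂ : P t₂ = 1) (hPt₃ : P t₃ = 1) :
    ∃ x, ‖x - (2 * ψ x) • P‖ ≠ ‖x‖ := by
  by_contra! hiso
  obtain ⟨u, hu₀, hu₁, hu⟩ := exists_continuous_zero_one_of_isClosed
    (toFinite {t₂, t₃}).isClosed (isClosed_singleton (x := t₁)) (by simp [h₁₂, h₁₃])
  obtain ⟨v, hv₀, hv₁, hv⟩ := exists_continuous_zero_one_of_isClosed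
    isClosed_singleton isClosed_singleton (disjoint_singleton.mpr h₂₃.symm)
  have hut₁ : u t₁ = 1 := hu₁ rfl
  have hut₂ : u t₂ = 0 := hu₀ (by simp)
  have hut₃ : u t₃ = 0 := hu₀ (by simp)
  have hvt₂ : v t₂ = 1 := hv₁ rfl
  have hvt₃ : v t₃ = 0 := hv₀ rfl
  have hu01 : ∀ t, 0 ≤ u t ∧ u t ≤ 1 := hu
  have hv01 : ∀ t, 0 ≤ v t ∧ v t ≤ 1 := hv
  have h₁ : ψ (P * u) = 1 / 2 := apply_mul_eq_half hiso hψ hP₀ hP₁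
    (fun t => (hu01 t).1) (fun t => (hu01 t).2) hPt₃ hPt₁ hut₃ hut₁
  have h₂ : ψ (P * ((1 - u) * v)) = 1 / 2 := apply_mul_eq_half hiso hψ hP₀ hP₁
    (fun t => by simp; nlinarith [hu01 t, hv01 t]) (fun t => by simp; nlinarith [hu01 t, hv01 t])
    hPt₃ hPt₂ (by simp [hvt₃]) (by simp [hut₂, hvt₂])
  have h₃ : ψ (P * (u + (1 - u) * v)) = 1 / 2 := apply_mul_eq_half hiso hψ hP₀ hP₁
    (fun t => by simp; nlinarith [hu01 t, hv01 t]) (fun t => by simp; nlinarith [hu01 t, hv01 t])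
    hPt₃ hPt₁ (by simp [hut₃, hvt₃]) (by simp [hut₁])
  rw [mul_add, map_add, h₁, h₂] at h₃
  norm_num at h₃

end ContinuousMap

namespace IsUncondBasis

variable {K : Type*} [TopologicalSpace K] [CompactSpace K]
  {e : ℕ → C(K, ℝ)} {f : ℕ → C(K, ℝ) →L[ℝ] ℝ}

lemma apply_one_smul_apply_eq_zero_or_one (hb : IsUncondBasis e f) (j : ℕ) (t : K) :
    (f j 1 • e j) t = 0 ∨ (f j 1 • e j) t = 1 := by
  have hext := (hb.reflection j).map_mem_extremePoints_closedBall
    ContinuousMap.one_mem_extremePoints_closedBall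
  have := ContinuousMap.abs_apply_eq_one_of_mem_extremePoints_closedBall hext t
  simp only [reflection_apply, ContinuousMap.sub_apply, ContinuousMap.one_apply,
    ContinuousMap.smul_apply, smul_eq_mul] at this ⊢
  rcases abs_eq zero_le_one |>.mp this with h | h
  · left; linarith
  · right; linarith

end IsUncondBasis

open ContinuousMap in
/-- If `K` is an infinite compact Hausdorff space, then the Banach space `C(K, ℝ)`
of real-valued continuous functions with the supremum norm has no normalized
1-unconditional basis. -/
theorem continuousMap_no_uncond_basis (K : Type*) [TopologicalSpace K] [CompactSpace K]
    [T2Space K] [Infinite K] :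
    ¬ ∃ (e : ℕ → C(K, ℝ)) (f : ℕ → C(K, ℝ) →L[ℝ] ℝ), IsUncondBasis e f := by
  classical
  rintro ⟨e, f, hb⟩
  obtain ⟨j, hj⟩ := exists_support_infinite_of_hasSum_one (hb.expand 1)
  set P := f j 1 • e j with hP
  have hP01 : ∀ t, P t = 0 ∨ P t = 1 := hb.apply_one_smul_apply_eq_zero_or_one j
  have hC : {t | P t = 1}.Infinite := hj.mono fun t ht => (hP01 t).resolve_left ht
  obtain ⟨s, hsC, hs⟩ := hC.exists_subset_card_eq 3
  obtain ⟨t₁, t₂, t₃, h₁₂, h₁₃, h₂₃, rfl⟩ := Finset.card_eq_three.mp hs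
  simp only [Finset.coe_insert, Finset.coe_singleton, insert_subset_iff,
    singleton_subset_iff, mem_ofPred_eq] at hsC
  obtain ⟨ht₁, ht₂, ht₃⟩ := hsC
  have ha : f j 1 ≠ 0 := fun ha => by simp [hP, ha] at ht₁
  obtain ⟨x, hx⟩ := exists_norm_sub_two_mul_smul_ne (P := P)
    (ψ := (f j 1)⁻¹ • (f j : C(K, ℝ) →ₗ[ℝ] ℝ)) (by simp [hP, hb.apply_self, ha])
    (fun t => by rcases hP01 t with h | h <;> simp [h])
    (fun t => by rcases hP01 t with h | h <;> simp [h]) h₁₂ h₁₃ h₂₃ ht₁ ht₂ ht₃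
  refine hx (.trans ?_ (hb.norm_sub_two_mul_smul x j))
  simp [hP, smul_smul]
  field_simp
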